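/- Let G be a group acting on a set X with finitely many orbits, with orbit representatives x₁, …, x_m, and let J ≤ G be a subgroup of finite index n such that Stab_G(xᵢ) ≤ J for each i. Let T = {x₁, …, x_m}. Then {gJT : g ∈ G} (where JT = ∪ᵢ Jxᵢ) is a partition of X into exactly n blocks, permuted transitively by G. -/

import Mathlib

/-!
Put `JT = ⋃ i, J • xᵢ`. If `y ∈ JT` and `g • y ∈ JT`, then `g jxᵢ = j'xₖ` with `j, j' ∈ J`; disjointness
of the `G`-orbits forces `i = k`, so `j'⁻¹ g j` stabilises `xᵢ` and hence lies in `J`, i.e. `g ∈ J`.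
Thus `JT` is a block whose setwise stabiliser is exactly `J`. Its translates cover `X` because the
`xᵢ` meet every orbit, so they form a partition of `X`; they make up one `G`-orbit in `Set X`, whose
size is the index of the stabiliser `J`.
-/

open Pointwise Function

namespace MulAction

variable {G X : Type*} [Group G] [MulAction G X]

theorem IsBlock.isPartition_range_smul {B : Set X} (hB : IsBlock G B) (hBe : B.Nonempty)
    (hcover : ∀ a : X, ∃ g : G, a ∈ g • B) :
    Setoid.IsPartition (Set.range fun g : G => g • B) := by
  refine ⟨?_, fun a => ?_⟩
  · rintro ⟨g, hg⟩
    exact hBe.ne_empty (Set.smul_set_eq_empty.1 hg)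
  · obtain ⟨g, ha⟩ := hcover a
    refine ⟨g • B, ⟨⟨g, rfl⟩, ha⟩, ?_⟩
    rintro _ ⟨⟨g', rfl⟩, ha'⟩
    exact hB.smul_eq_smul_of_nonempty ⟨a, ha', ha⟩

theorem eq_of_mem_orbit_of_pairwise_disjoint {ι : Type*} {x : ι → X}
    (hdisj : Pairwise (Disjoint on fun i => orbit G (x i))) {i k : ι}
    (h : x k ∈ orbit G (x i)) : i = k := by
  by_contra hne
  exact Set.disjoint_left.1 (hdisj hne) h (mem_orbit_self (x k))

variable {ι : Type*} (J : Subgroup G) (x : ι → X)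

def subgroupOrbitsUnion : Set X := ⋃ i, (fun j => j • x i) '' (J : Set G)

variable {J x}

theorem mem_subgroupOrbitsUnion {y : X} :
    y ∈ subgroupOrbitsUnion J x ↔ ∃ i, ∃ j ∈ J, j • x i = y := by
  simp only [subgroupOrbitsUnion, Set.mem_iUnion, Set.mem_image, SetLike.mem_coe]

theorem smul_mem_subgroupOrbitsUnion {j : G} (hj : j ∈ J) (i : ι) :
    j • x i ∈ subgroupOrbitsUnion J x :=
  mem_subgroupOrbitsUnion.2 ⟨i, j, hj, rfl⟩

theorem mem_subgroupOrbitsUnion_self (i : ι) : x i ∈ subgroupOrbitsUnion J x := by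
  simpa only [one_smul] using smul_mem_subgroupOrbitsUnion J.one_mem i

theorem le_stabilizer_subgroupOrbitsUnion : J ≤ stabilizer G (subgroupOrbitsUnion J x) := by
  have hsub : ∀ g ∈ J, g • subgroupOrbitsUnion J x ⊆ subgroupOrbitsUnion J x := by
    rintro g hg _ ⟨y, hy, rfl⟩
    obtain ⟨i, j, hj, rfl⟩ := mem_subgroupOrbitsUnion.1 hy
    simpa only [smul_smul] using smul_mem_subgroupOrbitsUnion (J.mul_mem hg hj) i
  intro g hg
  exact (hsub g hg).antisymm (Set.subset_smul_set_iff.2 (hsub g⁻¹ (J.inv_mem hg)))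

theorem mem_of_smul_mem_subgroupOrbitsUnion
    (hdisj : Pairwise (Disjoint on fun i => orbit G (x i)))
    (hstab : ∀ i, stabilizer G (x i) ≤ J) {g : G} {y : X}
    (hy : y ∈ subgroupOrbitsUnion J x) (hgy : g • y ∈ subgroupOrbitsUnion J x) : g ∈ J := by
  obtain ⟨i, j, hj, rfl⟩ := mem_subgroupOrbitsUnion.1 hy
  obtain ⟨k, j', hj', hk⟩ := mem_subgroupOrbitsUnion.1 hgy
  have hfix : (j'⁻¹ * g * j) • x i = x k := by rw [mul_smul, mul_smul, ← hk, inv_smul_smul]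
  obtain rfl : i = k := eq_of_mem_orbit_of_pairwise_disjoint hdisj ⟨_, hfix⟩
  have hfixJ : j'⁻¹ * g * j ∈ J := hstab i hfix
  simpa [mul_assoc] using J.mul_mem (J.mul_mem hj' hfixJ) (J.inv_mem hj)

theorem stabilizer_subgroupOrbitsUnion [Nonempty ι]
    (hdisj : Pairwise (Disjoint on fun i => orbit G (x i)))
    (hstab : ∀ i, stabilizer G (x i) ≤ J) :
    stabilizer G (subgroupOrbitsUnion J x) = J := by
  refine le_antisymm (fun g hg => ?_) le_stabilizer_subgroupOrbitsUnion
  obtain ⟨i⟩ := ‹Nonempty ι›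
  have hxi : x i ∈ subgroupOrbitsUnion J x := mem_subgroupOrbitsUnion_self i
  refine mem_of_smul_mem_subgroupOrbitsUnion hdisj hstab hxi ?_
  rw [← mem_stabilizer_iff.1 hg]
  exact Set.smul_mem_smul_set hxi

theorem isBlock_subgroupOrbitsUnion
    (hdisj : Pairwise (Disjoint on fun i => orbit G (x i)))
    (hstab : ∀ i, stabilizer G (x i) ≤ J) :
    IsBlock G (subgroupOrbitsUnion J x) := by
  refine isBlock_iff_smul_eq_of_nonempty.2 fun g ⟨_, ⟨y, hy, rfl⟩, hgy⟩ => ?_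
  exact le_stabilizer_subgroupOrbitsUnion (mem_of_smul_mem_subgroupOrbitsUnion hdisj hstab hy hgy)

end MulAction

open MulAction in
theorem multi_orbit_block_partition_general {G X : Type*} [Group G] [MulAction G X]
    (m : ℕ) (hm : 0 < m) (x : Fin m → X)
    (hcover : ∀ y : X, ∃ i, y ∈ MulAction.orbit G (x i))
    (hdisj : ∀ i j, i ≠ j → Disjoint (MulAction.orbit G (x i)) (MulAction.orbit G (x j)))
    (J : Subgroup G) (n : ℕ) (hidx : J.index = n)
    (hstab : ∀ i, MulAction.stabilizer G (x i) ≤ J) :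
    Setoid.IsPartition
        (Set.range fun g : G => g • ⋃ i, (fun j => j • x i) '' (J : Set G)) ∧
      Nat.card (Set.range fun g : G => g • ⋃ i, (fun j => j • x i) '' (J : Set G)) = n ∧
      ∀ S ∈ (Set.range fun g : G => g • ⋃ i, (fun j => j • x i) '' (J : Set G)),
        ∀ S' ∈ (Set.range fun g : G => g • ⋃ i, (fun j => j • x i) '' (J : Set G)),
          ∃ h : G, h • S = S' := by
  have : Nonempty (Fin m) := ⟨⟨0, hm⟩⟩
  change Setoid.IsPartition (orbit G (subgroupOrbitsUnion J x)) ∧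
    Nat.card (orbit G (subgroupOrbitsUnion J x)) = n ∧
    ∀ S ∈ orbit G (subgroupOrbitsUnion J x), ∀ S' ∈ orbit G (subgroupOrbitsUnion J x),
      ∃ h : G, h • S = S'
  refine ⟨?_, ?_, fun S hS S' hS' => mem_orbit_iff.1 (orbit_eq_iff.2 hS ▸ hS')⟩
  · refine (isBlock_subgroupOrbitsUnion hdisj hstab).isPartition_range_smul
      ⟨_, mem_subgroupOrbitsUnion_self ⟨0, hm⟩⟩ fun y => ?_
    obtain ⟨i, g, rfl⟩ := hcover y
    exact ⟨g, Set.smul_mem_smul_set (mem_subgroupOrbitsUnion_self i)⟩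
  · rw [Nat.card_coe_set_eq, ← index_stabilizer, stabilizer_subgroupOrbitsUnion hdisj hstab, hidx]

theorem multi_orbit_block_partition {G X : Type*} [Group G] [MulAction G X]
    (m : ℕ) (hm : 0 < m) (x : Fin m → X)
    (hcover : ∀ y : X, ∃ i, y ∈ MulAction.orbit G (x i))
    (hdisj : ∀ i j, i ≠ j → Disjoint (MulAction.orbit G (x i)) (MulAction.orbit G (x j)))
    (J : Subgroup G) (n : ℕ) (hn : n ≠ 0) (hidx : J.index = n)
    (hstab : ∀ i, MulAction.stabilizer G (x i) ≤ J) :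
    Setoid.IsPartition
        (Set.range fun g : G => g • ⋃ i, (fun j => j • x i) '' (J : Set G)) ∧
      Nat.card (Set.range fun g : G => g • ⋃ i, (fun j => j • x i) '' (J : Set G)) = n ∧
      ∀ S ∈ (Set.range fun g : G => g • ⋃ i, (fun j => j • x i) '' (J : Set G)),
        ∀ S' ∈ (Set.range fun g : G => g • ⋃ i, (fun j => j • x i) '' (J : Set G)),
          ∃ h : G, h • S = S' :=
  multi_orbit_block_partition_general m hm x hcover hdisj J n hidx hstab
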